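/- Generic existence of the SoV covector basis: suppose K is nonderogatory, i.e. its minimal polynomial equals its characteristic polynomial (equivalently K has non-degenerate, simple spectrum). Consider the function D sending (S, ξ_1, …, ξ_N, η) ∈ ℂ^{n^N} × ℂ^N × ℂ to the determinant of the n^N × n^N matrix whose rows, indexed by the tuples h = (h_1,…,h_N) ∈ {0,…,n−1}^N, are the covectors ⟨h| = ⟨S| ∘ ∏_{a=1}^N (T_1^{(K)}(ξ_a))^{h_a} expressed in the standard basis of H. Then D is a polynomial function of the coordinates of S, the ξ_a, and η, and D is not identically zero; consequently, for every (S, ξ, η) outside the zero locus of this nonzero polynomial, the n^N covectors ⟨h| form a basis of the dual space H*. -/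

import Mathlib

open Matrix BigOperators

noncomputable section

namespace GLnSoV

/-- The permutation operator on `ℂ^n ⊗ ℂ^n`. -/
def permOp (n : ℕ) : Matrix (Fin n × Fin n) (Fin n × Fin n) ℂ :=
  Matrix.of fun p q => if p.1 = q.2 ∧ p.2 = q.1 then (1 : ℂ) else 0

/-- The rational `gl_n` R-matrix `R(λ) = λ·Id + η·P`. -/
def Rmat (n : ℕ) (η lam : ℂ) : Matrix (Fin n × Fin n) (Fin n × Fin n) ℂ :=
  lam • (1 : Matrix (Fin n × Fin n) (Fin n × Fin n) ℂ) + η • permOp n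

/-- `R(λ)` acting on the `a`-th and `b`-th factors of a tensor product of copies of `ℂ^n`. -/
def Rab (n : ℕ) (η : ℂ) {ι : Type} [Fintype ι] [DecidableEq ι] (a b : ι) (lam : ℂ) :
    Matrix (ι → Fin n) (ι → Fin n) ℂ :=
  Matrix.of fun x y =>
    Rmat n η lam (x a, x b) (y a, y b) *
      ∏ c ∈ Finset.univ.filter (fun c => c ≠ a ∧ c ≠ b), (if x c = y c then (1 : ℂ) else 0)

/-- `R(λ)` acting on the auxiliary space and the `j`-th site of the quantum space. -/
def Raux (n N : ℕ) (η : ℂ) (lam : ℂ) (j : Fin N) :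
    Matrix (Fin n × (Fin N → Fin n)) (Fin n × (Fin N → Fin n)) ℂ :=
  Matrix.of fun p q =>
    Rmat n η lam (p.1, p.2 j) (q.1, q.2 j) *
      ∏ c ∈ Finset.univ.filter (fun c => c ≠ j), (if p.2 c = q.2 c then (1 : ℂ) else 0)

/-- The twist matrix `K` acting on the auxiliary space. -/
def Kaux (n N : ℕ) (K : Matrix (Fin n) (Fin n) ℂ) :
    Matrix (Fin n × (Fin N → Fin n)) (Fin n × (Fin N → Fin n)) ℂ :=
  Matrix.of fun p q => K p.1 q.1 * (if p.2 = q.2 then (1 : ℂ) else 0)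

/-- The twisted monodromy matrix `M^{(K)}(λ) = K_a R_{a,N}(λ-ξ_N) ⋯ R_{a,1}(λ-ξ_1)`. -/
def monodromy (n N : ℕ) (η : ℂ) (ξ : Fin N → ℂ) (K : Matrix (Fin n) (Fin n) ℂ) (lam : ℂ) :
    Matrix (Fin n × (Fin N → Fin n)) (Fin n × (Fin N → Fin n)) ℂ :=
  Kaux n N K * (List.ofFn (fun j : Fin N => Raux n N η (lam - ξ j.rev) j.rev)).prod

/-- The operator permuting the tensor factors of `(ℂ^n)^{⊗m}` according to `π`. -/
def permTensorOp (n m : ℕ) (π : Equiv.Perm (Fin m)) :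
    Matrix (Fin m → Fin n) (Fin m → Fin n) ℂ :=
  Matrix.of fun v w => if v = w ∘ π then (1 : ℂ) else 0

/-- The antisymmetrizer `P⁻_{1…m}` on `(ℂ^n)^{⊗m}`. -/
def antisym (n m : ℕ) : Matrix (Fin m → Fin n) (Fin m → Fin n) ℂ :=
  (m.factorial : ℂ)⁻¹ •
    ∑ π : Equiv.Perm (Fin m), ((Equiv.Perm.sign π : ℤ) : ℂ) • permTensorOp n m π

/-- The monodromy matrix with the `j`-th copy of `(ℂ^n)^{⊗m}` as auxiliary space. -/
def MauxJ (n N : ℕ) (η : ℂ) (ξ : Fin N → ℂ) (K : Matrix (Fin n) (Fin n) ℂ) (m : ℕ)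
    (j : Fin m) (lam : ℂ) :
    Matrix ((Fin m → Fin n) × (Fin N → Fin n)) ((Fin m → Fin n) × (Fin N → Fin n)) ℂ :=
  Matrix.of fun p q =>
    monodromy n N η ξ K lam (p.1 j, p.2) (q.1 j, q.2) *
      ∏ c ∈ Finset.univ.filter (fun c => c ≠ j), (if p.1 c = q.1 c then (1 : ℂ) else 0)

/-- The antisymmetrizer tensored with the identity of the quantum space. -/
def antisymH (n N m : ℕ) :
    Matrix ((Fin m → Fin n) × (Fin N → Fin n)) ((Fin m → Fin n) × (Fin N → Fin n)) ℂ :=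
  Matrix.of fun p q => antisym n m p.1 q.1 * (if p.2 = q.2 then (1 : ℂ) else 0)

/-- The fused transfer matrix `T_m^{(K)}(λ)`, the trace over the `m` auxiliary copies of `ℂ^n`
of `P⁻_{1…m} M₁(λ) M₂(λ-η) ⋯ M_m(λ-(m-1)η)`. -/
def transfer (n N : ℕ) (η : ℂ) (ξ : Fin N → ℂ) (K : Matrix (Fin n) (Fin n) ℂ)
    (m : ℕ) (lam : ℂ) : Matrix (Fin N → Fin n) (Fin N → Fin n) ℂ :=
  Matrix.of fun x y =>
    ∑ v : Fin m → Fin n,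
      (antisymH n N m *
        (List.ofFn (fun j : Fin m => MauxJ n N η ξ K m j (lam - (j : ℕ) * η))).prod)
        (v, x) (v, y)

/-- `K ⊗ ⋯ ⊗ K` on `(ℂ^n)^{⊗m}`. -/
def Ktensor (n : ℕ) (K : Matrix (Fin n) (Fin n) ℂ) (m : ℕ) :
    Matrix (Fin m → Fin n) (Fin m → Fin n) ℂ :=
  Matrix.of fun v w => ∏ j, K (v j) (w j)

/-- The asymptotic coefficient `tr(P⁻_{1…m} K₁ ⋯ K_m)`. -/
def asymCoef (n : ℕ) (K : Matrix (Fin n) (Fin n) ℂ) (m : ℕ) : ℂ :=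
  (antisym n m * Ktensor n K m).trace

/-- The scalar quantum determinant. -/
def qdet (n N : ℕ) (η : ℂ) (ξ : Fin N → ℂ) (K : Matrix (Fin n) (Fin n) ℂ) (lam : ℂ) : ℂ :=
  K.det * ∏ b, ((lam - ξ b + η) * ∏ m ∈ Finset.Icc 1 (n - 1), (lam - ξ b - (m : ℂ) * η))

/-- The candidate eigenvalue function `t₁^{(K,x)}(λ)`. -/
def t1fun (n N : ℕ) (ξ : Fin N → ℂ) (K : Matrix (Fin n) (Fin n) ℂ) (x : Fin N → ℂ)
    (lam : ℂ) : ℂ :=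
  K.trace * ∏ a, (lam - ξ a) +
    ∑ a, x a * ∏ b ∈ Finset.univ.erase a, (lam - ξ b) / (ξ a - ξ b)

/-- The interpolation coefficients `g_a^{(m+1)}(λ)` (second argument is `m`). -/
def gfun (N : ℕ) (η : ℂ) (ξ : Fin N → ℂ) (m : ℕ) (a : Fin N) (lam : ℂ) : ℂ :=
  (∏ b ∈ Finset.univ.erase a, (lam - ξ b) / (ξ a - ξ b)) *
    ∏ b, ∏ r ∈ Finset.Icc 1 m, (ξ a - ξ b - (r : ℂ) * η)⁻¹

/-- The candidate eigenvalue functions `t_m^{(K,x)}(λ)`, defined recursively. -/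
def tfun (n N : ℕ) (η : ℂ) (ξ : Fin N → ℂ) (K : Matrix (Fin n) (Fin n) ℂ)
    (x : Fin N → ℂ) : ℕ → ℂ → ℂ
  | 0, _ => 1
  | 1, lam => t1fun n N ξ K x lam
  | m + 2, lam =>
      (∏ b, ∏ r ∈ Finset.Icc 1 (m + 1), (lam - ξ b - (r : ℂ) * η)) *
        (asymCoef n K (m + 2) * ∏ b, (lam - ξ b) +
          ∑ a, gfun N η ξ (m + 1) a lam * x a * tfun n N η ξ K x (m + 1) (ξ a - η))

/-- The SoV operator `∏_{a} (T₁^{(K)}(ξ_a))^{h_a}`. -/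
def sovOp (n N : ℕ) (η : ℂ) (ξ : Fin N → ℂ) (K : Matrix (Fin n) (Fin n) ℂ)
    (h : Fin N → Fin n) : Matrix (Fin N → Fin n) (Fin N → Fin n) ℂ :=
  (List.ofFn (fun a : Fin N => transfer n N η ξ K 1 (ξ a) ^ (h a : ℕ))).prod

/-- The SoV covector `⟨h| = ⟨S| ∏_a (T₁^{(K)}(ξ_a))^{h_a}`. -/
def sovCovector (n N : ℕ) (η : ℂ) (ξ : Fin N → ℂ) (K : Matrix (Fin n) (Fin n) ℂ)
    (S : (Fin N → Fin n) → ℂ) (h : Fin N → Fin n) : (Fin N → Fin n) → ℂ :=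
  S ᵥ* sovOp n N η ξ K h

/-- The SoV basis hypothesis: the covectors `⟨h|` form a basis of the dual space. -/
def sovBasisHyp (n N : ℕ) (η : ℂ) (ξ : Fin N → ℂ) (K : Matrix (Fin n) (Fin n) ℂ)
    (S : (Fin N → Fin n) → ℂ) : Prop :=
  ∃ B : Module.Basis (Fin N → Fin n) ℂ ((Fin N → Fin n) → ℂ),
    ∀ h, B h = sovCovector n N η ξ K S h

/-- The coefficient `α₁(λ) = ᾱ ∏_a (λ + η - ξ_a)`. -/
def alpha1 (N : ℕ) (η : ℂ) (ξ : Fin N → ℂ) (abar lam : ℂ) : ℂ :=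
  abar * ∏ a, (lam + η - ξ a)

/-- The coefficients `α_b(λ)` of the quantum spectral curve. -/
def alphaF (N : ℕ) (η : ℂ) (ξ : Fin N → ℂ) (abar : ℂ) : ℕ → ℂ → ℂ
  | 0, _ => -1
  | j + 1, lam =>
      (-1 : ℂ) ^ j * ∏ h ∈ Finset.range (j + 1), alpha1 N η ξ abar (lam - (h : ℂ) * η)


end GLnSoV

/-!
The covector matrix is built from `Rmat` by ring operations only, so its determinant is the
evaluation of a single determinant `sovDet` over the polynomial ring in `(S, ξ, η)`, and where
that polynomial does not vanish the rows form a basis. To see that `sovDet ≠ 0`, specialise to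
`η = 1`, `ξ_b = b X` and the product covector `S = e ⊗ ⋯ ⊗ e`, which leaves a polynomial in `X`.
In `T(ξ_a)` the factor `R_{0a}(0) = P_{0a}` is constant while every other factor is
`(ξ_a - ξ_b) Id + P_{0b}`, so the top coefficient of `T(ξ_a)` is `∏_{b ≠ a} (a - b)` times
`tr_0 (K_0 P_{0a}) = K_a`. Hence the top coefficient of the determinant is a nonzero constant
times `det (W ⊗ ⋯ ⊗ W)`, where `W` is the Krylov matrix with rows `e K^j`. Since `K` is
nonderogatory, the `ℂ[X]`-module `ℂ^n` it defines is cyclic, so `e` can be chosen with `W`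
invertible.
-/

open Polynomial

theorem Polynomial.coeff_prod_sum_of_natDegree_le {R ι : Type*} [CommSemiring R] (s : Finset ι)
    (f : ι → R[X]) (d : ι → ℕ) (h : ∀ i ∈ s, (f i).natDegree ≤ d i) :
    (∏ i ∈ s, f i).coeff (∑ i ∈ s, d i) = ∏ i ∈ s, (f i).coeff (d i) := by
  classical
  induction s using Finset.cons_induction with
  | empty => simp
  | cons a s ha ih =>
    simp only [Finset.mem_cons, forall_eq_or_imp] at h
    rw [Finset.prod_cons, Finset.sum_cons, Finset.prod_cons,
      coeff_mul_add_eq_of_natDegree_le h.1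
        ((natDegree_prod_le _ _).trans (Finset.sum_le_sum h.2)), ih h.2]

theorem List.prod_ofFn_mulSingle {M : Type*} [Monoid M] {m : ℕ} (i : Fin m) (x : M) :
    (List.ofFn (Pi.mulSingle i x)).prod = x := by
  induction m with
  | zero => exact i.elim0
  | succ m ih =>
    rw [List.ofFn_succ, List.prod_cons]
    cases i using Fin.cases with
    | zero => simp [Fin.succ_ne_zero]
    | succ i =>
      have htail : (fun j : Fin m => (Pi.mulSingle i.succ x : Fin (m + 1) → M) j.succ) =
          Pi.mulSingle i x := by
        ext j
        simp [Pi.mulSingle_apply]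
      simp [(Fin.succ_ne_zero i).symm, htail, ih]

theorem Pi.list_prod_ofFn_mulSingle {M : Type*} [Monoid M] {m : ℕ} (g : Fin m → M) :
    (List.ofFn fun a => Pi.mulSingle a (g a)).prod = g := by
  ext c
  rw [Pi.list_prod_apply, List.map_ofFn, ← List.prod_ofFn_mulSingle c (g c)]
  congr 2
  ext a
  by_cases hca : c = a <;> simp [eq_comm, hca]

theorem List.prod_ofFn_smul {R M : Type*} [CommMonoid R] [Monoid M] [MulAction R M]
    [IsScalarTower R M M] [SMulCommClass R M M] {m : ℕ} (c : Fin m → R) (f : Fin m → M) :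
    (List.ofFn fun j => c j • f j).prod = (∏ j, c j) • (List.ofFn f).prod := by
  induction m with
  | zero => simp
  | succ m ih =>
    simp only [List.ofFn_succ, List.prod_cons, ih, Fin.prod_univ_succ, smul_mul_smul_comm]

theorem Module.End.exists_linearIndependent_pow_apply {F V : Type*} [Field F] [AddCommGroup V]
    [Module F V] [FiniteDimensional F V] (f : Module.End F V) :
    ∃ x : V, LinearIndependent F fun i : Fin (minpoly F f).natDegree => (f ^ (i : ℕ)) x := by
  obtain ⟨x, hx⟩ := Module.exists_ker_toSpanSingleton_eq_annihilator F[X] (AEval' f)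
  obtain ⟨x, rfl⟩ := (AEval'.of f).surjective x
  refine ⟨x, Fintype.linearIndependent_iff.mpr fun c hc i => ?_⟩
  set p : F[X] := ∑ j : Fin (minpoly F f).natDegree, C (c j) * X ^ (j : ℕ)
  have hp : p ∈ LinearMap.ker (LinearMap.toSpanSingleton F[X] _ (AEval'.of f x)) := by
    rw [LinearMap.mem_ker, LinearMap.toSpanSingleton_apply, ← Module.AEval.of_aeval_smul]
    simp [p, hc]
  rw [hx, ← span_minpoly_eq_annihilator, Ideal.mem_span_singleton] at hp
  have hp0 : p = 0 := eq_zero_of_dvd_of_natDegree_lt hp <| by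
    have : p.natDegree ≤ (minpoly F f).natDegree - 1 := natDegree_sum_le_of_forall_le _ _
      fun j _ => (natDegree_C_mul_X_pow_le _ _).trans (by omega)
    have := i.isLt
    omega
  simpa [p, coeff_C_mul_X_pow, Fin.val_inj] using congrArg (fun q : F[X] => q.coeff i) hp0

namespace Matrix

section PolynomialEntries

variable {ι ι' ι'' R : Type*} [Semiring R]

def NatDegreeLE (d : ℕ) (M : Matrix ι ι' R[X]) : Prop := ∀ i j, (M i j).natDegree ≤ d

def coeff (M : Matrix ι ι' R[X]) (d : ℕ) : Matrix ι ι' R := of fun i j => (M i j).coeff d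

@[simp]
theorem coeff_apply (M : Matrix ι ι' R[X]) (d : ℕ) (i : ι) (j : ι') :
    M.coeff d i j = (M i j).coeff d := rfl

theorem natDegreeLE_map_C (B : Matrix ι ι' R) : (B.map C).NatDegreeLE 0 :=
  fun i j => by simp

@[simp]
theorem coeff_map_C_zero (B : Matrix ι ι' R) : (B.map C).coeff 0 = B := by
  ext; simp

theorem natDegreeLE_smul_one_add_map_C [DecidableEq ι] (c : R) (B : Matrix ι ι R) :
    ((C c * X) • (1 : Matrix ι ι R[X]) + B.map C).NatDegreeLE 1 := by
  intro i j
  rw [add_apply, smul_apply, one_apply, smul_eq_mul, map_apply]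
  refine (natDegree_add_le _ _).trans (max_le ?_ (by simp))
  split_ifs
  · simpa using natDegree_C_mul_X_pow_le c 1
  · simp

theorem coeff_smul_one_add_map_C [DecidableEq ι] (c : R) (B : Matrix ι ι R) :
    ((C c * X) • (1 : Matrix ι ι R[X]) + B.map C).coeff 1 = c • 1 := by
  ext i j
  by_cases hij : i = j <;> simp [hij, coeff_C]

variable [Fintype ι']

theorem NatDegreeLE.mul {d e : ℕ} {M : Matrix ι ι' R[X]} {P : Matrix ι' ι'' R[X]}
    (hM : M.NatDegreeLE d) (hP : P.NatDegreeLE e) : (M * P).NatDegreeLE (d + e) :=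
  fun i j => natDegree_sum_le_of_forall_le _ _ fun k _ =>
    natDegree_mul_le.trans (add_le_add (hM i k) (hP k j))

theorem coeff_mul_add {d e : ℕ} {M : Matrix ι ι' R[X]} {P : Matrix ι' ι'' R[X]}
    (hM : M.NatDegreeLE d) (hP : P.NatDegreeLE e) :
    (M * P).coeff (d + e) = M.coeff d * P.coeff e := by
  ext i j
  simp only [coeff_apply, mul_apply, finsetSum_coeff]
  exact Finset.sum_congr rfl fun k _ => coeff_mul_add_eq_of_natDegree_le (hM i k) (hP k j)

theorem natDegree_vecMul_le {d : ℕ} (s : ι' → R) {M : Matrix ι' ι R[X]} (hM : M.NatDegreeLE d)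
    (x : ι) : (((fun i => C (s i)) ᵥ* M) x).natDegree ≤ d :=
  natDegree_sum_le_of_forall_le _ _ fun i _ => natDegree_C_mul_le _ _ |>.trans (hM i x)

theorem coeff_vecMul (s : ι' → R) (M : Matrix ι' ι R[X]) (d : ℕ) (x : ι) :
    (((fun i => C (s i)) ᵥ* M) x).coeff d = (s ᵥ* M.coeff d) x := by
  simp [vecMul, dotProduct, finsetSum_coeff]

variable [DecidableEq ι']

theorem NatDegreeLE.list_ofFn_prod {m : ℕ} {f : Fin m → Matrix ι' ι' R[X]} {d : Fin m → ℕ}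
    (h : ∀ k, (f k).NatDegreeLE (d k)) : (List.ofFn f).prod.NatDegreeLE (∑ k, d k) := by
  induction m with
  | zero => simpa using natDegreeLE_map_C (1 : Matrix ι' ι' R)
  | succ m ih =>
    rw [List.ofFn_succ, List.prod_cons, Fin.sum_univ_succ]
    exact (h 0).mul (ih fun k => h k.succ)

theorem coeff_list_ofFn_prod {m : ℕ} {f : Fin m → Matrix ι' ι' R[X]} {d : Fin m → ℕ}
    (h : ∀ k, (f k).NatDegreeLE (d k)) :
    (List.ofFn f).prod.coeff (∑ k, d k) = (List.ofFn fun k => (f k).coeff (d k)).prod := by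
  induction m with
  | zero => simpa using coeff_map_C_zero (1 : Matrix ι' ι' R)
  | succ m ih =>
    rw [List.ofFn_succ, List.prod_cons, Fin.sum_univ_succ,
      coeff_mul_add (h 0) (NatDegreeLE.list_ofFn_prod fun k => h k.succ), ih fun k => h k.succ,
      List.ofFn_succ, List.prod_cons]

theorem NatDegreeLE.pow {d : ℕ} {M : Matrix ι' ι' R[X]} (h : M.NatDegreeLE d) (k : ℕ) :
    (M ^ k).NatDegreeLE (k * d) := by
  simpa [List.ofFn_const] using NatDegreeLE.list_ofFn_prod (d := fun _ : Fin k => d) fun _ => h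

theorem coeff_pow {d : ℕ} {M : Matrix ι' ι' R[X]} (h : M.NatDegreeLE d) (k : ℕ) :
    (M ^ k).coeff (k * d) = M.coeff d ^ k := by
  simpa [List.ofFn_const] using coeff_list_ofFn_prod (d := fun _ : Fin k => d) fun _ => h

end PolynomialEntries

theorem coeff_det_sum_of_natDegree_le {ι R : Type*} [CommRing R] [Fintype ι] [DecidableEq ι]
    (M : Matrix ι ι R[X]) (d : ι → ℕ) (h : ∀ i j, (M i j).natDegree ≤ d i) :
    M.det.coeff (∑ i, d i) = (of fun i j => (M i j).coeff (d i)).det := by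
  simp only [det_apply', finsetSum_coeff, of_apply]
  refine Finset.sum_congr rfl fun σ _ => ?_
  rw [← Equiv.sum_comp σ d, ← C_eq_intCast, coeff_C_mul,
    coeff_prod_sum_of_natDegree_le _ _ _ fun i _ => h (σ i) i]

section PartialTrace

variable {α β R : Type*} [Fintype α]

def partialTrace [AddCommMonoid R] (M : Matrix (α × β) (α × β) R) : Matrix β β R :=
  of fun x y => ∑ i, M (i, x) (i, y)

theorem partialTrace_map {S : Type*} [NonAssocSemiring R] [NonAssocSemiring S] (φ : R →+* S)
    (M : Matrix (α × β) (α × β) R) : (M.map φ).partialTrace = M.partialTrace.map φ := by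
  ext x y
  simp [partialTrace]

variable [Semiring R]

theorem partialTrace_smul (c : R) (M : Matrix (α × β) (α × β) R) :
    (c • M).partialTrace = c • M.partialTrace := by
  ext x y
  simp [partialTrace, Finset.mul_sum]

theorem NatDegreeLE.partialTrace {d : ℕ} {M : Matrix (α × β) (α × β) R[X]}
    (hM : M.NatDegreeLE d) : M.partialTrace.NatDegreeLE d :=
  fun _ _ => natDegree_sum_le_of_forall_le _ _ fun _ _ => hM _ _

theorem coeff_partialTrace (M : Matrix (α × β) (α × β) R[X]) (d : ℕ) :
    M.partialTrace.coeff d = (M.coeff d).partialTrace := by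
  ext x y
  simp [partialTrace, finsetSum_coeff]

end PartialTrace

section PiKronecker

variable {ι α R : Type*} [Fintype ι] [CommRing R]

def piKronecker (M : ι → Matrix α α R) : Matrix (ι → α) (ι → α) R :=
  of fun x y => ∏ c, M c (x c) (y c)

theorem piKronecker_mul [DecidableEq ι] [Fintype α] (M M' : ι → Matrix α α R) :
    piKronecker M * piKronecker M' = piKronecker (M * M') := by
  ext x y
  simp only [piKronecker, mul_apply, of_apply, Pi.mul_apply, Fintype.prod_sum,
    Finset.prod_mul_distrib]

theorem piKronecker_one [DecidableEq α] : piKronecker (1 : ι → Matrix α α R) = 1 := by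
  ext x y
  simp only [piKronecker, of_apply, Pi.one_apply, one_apply, Finset.prod_ite_zero,
    Finset.mem_univ, true_implies, Finset.prod_const_one, funext_iff]

theorem vecMul_piKronecker [DecidableEq ι] [Fintype α] (v : ι → α → R) (M : ι → Matrix α α R) :
    (fun y => ∏ c, v c (y c)) ᵥ* piKronecker M = fun x => ∏ c, (v c ᵥ* M c) (x c) := by
  ext x
  simp only [vecMul, dotProduct, piKronecker, of_apply, ← Finset.prod_mul_distrib]
  exact (Fintype.prod_sum fun c k => v c k * M c k (x c)).symm

variable [DecidableEq ι] [Fintype α] [DecidableEq α]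

def piKroneckerHom : (ι → Matrix α α R) →* Matrix (ι → α) (ι → α) R where
  toFun := piKronecker
  map_one' := piKronecker_one
  map_mul' M M' := (piKronecker_mul M M').symm

theorem piKronecker_pow (M : ι → Matrix α α R) (k : ℕ) :
    piKronecker M ^ k = piKronecker (M ^ k) :=
  (map_pow piKroneckerHom M k).symm

theorem isUnit_piKronecker {M : ι → Matrix α α R} (h : ∀ c, IsUnit (M c)) :
    IsUnit (piKronecker M) :=
  (Pi.isUnit_iff.mpr h).map piKroneckerHom

end PiKronecker

section Field

variable {F : Type*} [Field F]

theorem aeval_transpose {n : Type*} [Fintype n] [DecidableEq n] (K : Matrix n n F) (p : F[X]) :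
    aeval Kᵀ p = (aeval K p)ᵀ := by
  induction p using Polynomial.induction_on' with
  | add p q hp hq => simp [hp, hq]
  | monomial k a => simp [transpose_pow, Algebra.algebraMap_eq_smul_one]

theorem minpoly_transpose {n : Type*} [Fintype n] [DecidableEq n] (K : Matrix n n F) :
    minpoly F Kᵀ = minpoly F K := by
  refine (minpoly.unique _ _ (minpoly.monic (.of_finite F K)) ?_ fun q hq hqK => ?_).symm
  · rw [aeval_transpose, minpoly.aeval, transpose_zero]
  · refine minpoly.min F K hq ?_
    rw [← transpose_eq_zero, ← aeval_transpose, hqK]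

theorem exists_isUnit_krylov {n : ℕ} (K : Matrix (Fin n) (Fin n) F)
    (hK : minpoly F K = K.charpoly) :
    ∃ e : Fin n → F, IsUnit (of fun j i : Fin n => (e ᵥ* K ^ (j : ℕ)) i) := by
  have hdeg : (minpoly F (toLin' Kᵀ)).natDegree = n := by
    rw [minpoly_toLin', minpoly_transpose, hK, charpoly_natDegree_eq_dim, Fintype.card_fin]
  obtain ⟨e, he⟩ := Module.End.exists_linearIndependent_pow_apply (toLin' Kᵀ)
  rw [hdeg] at he
  refine ⟨e, linearIndependent_rows_iff_isUnit.mp ?_⟩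
  have hrow : (of fun j i : Fin n => (e ᵥ* K ^ (j : ℕ)) i).row =
      fun j : Fin n => (toLin' Kᵀ ^ (j : ℕ)) e := by
    ext j i
    simp [← toLin'_pow, ← transpose_pow, mulVec_transpose]
  rwa [hrow]

theorem exists_basis_rows_of_det_ne_zero {ι : Type*} [Fintype ι] [DecidableEq ι]
    {M : Matrix ι ι F} (hM : M.det ≠ 0) : ∃ B : Module.Basis ι F (ι → F), ∀ i, B i = M i := by
  have hli : LinearIndependent F M.row := linearIndependent_rows_iff_isUnit.mpr <|
    (isUnit_iff_isUnit_det M).mpr (isUnit_iff_ne_zero.mpr hM)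
  exact ⟨basisOfLinearIndependentOfCardEqFinrank' _ hli (by simp),
    congrFun (coe_basisOfLinearIndependentOfCardEqFinrank' _ _ _)⟩

end Field

end Matrix

/-! The definitions `Rmat`, …, `sovCovector` over an arbitrary commutative ring, so that they can
be evaluated at polynomials. Only the transfer matrix `T_1` is needed, written as a partial trace
over the auxiliary space. -/
namespace GLnSoV.OverRing

open Finset

section Definitions

variable {R S : Type*} [CommRing R] [CommRing S] (n N : ℕ)

def permOp : Matrix (Fin n × Fin n) (Fin n × Fin n) R :=
  Matrix.of fun p q => if p.1 = q.2 ∧ p.2 = q.1 then (1 : R) else 0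

def Rmat (η lam : R) : Matrix (Fin n × Fin n) (Fin n × Fin n) R :=
  lam • (1 : Matrix (Fin n × Fin n) (Fin n × Fin n) R) + η • permOp n

def Raux (η lam : R) (j : Fin N) :
    Matrix (Fin n × (Fin N → Fin n)) (Fin n × (Fin N → Fin n)) R :=
  Matrix.of fun p q =>
    Rmat n η lam (p.1, p.2 j) (q.1, q.2 j) *
      ∏ c ∈ Finset.univ.filter (fun c => c ≠ j), (if p.2 c = q.2 c then (1 : R) else 0)

def Kaux (K : Matrix (Fin n) (Fin n) R) :
    Matrix (Fin n × (Fin N → Fin n)) (Fin n × (Fin N → Fin n)) R :=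
  Matrix.of fun p q => K p.1 q.1 * (if p.2 = q.2 then (1 : R) else 0)

def monodromy (η : R) (ξ : Fin N → R) (K : Matrix (Fin n) (Fin n) R) (lam : R) :
    Matrix (Fin n × (Fin N → Fin n)) (Fin n × (Fin N → Fin n)) R :=
  Kaux n N K * (List.ofFn (fun j : Fin N => Raux n N η (lam - ξ j.rev) j.rev)).prod

def transfer (η : R) (ξ : Fin N → R) (K : Matrix (Fin n) (Fin n) R) (lam : R) :
    Matrix (Fin N → Fin n) (Fin N → Fin n) R :=
  (monodromy n N η ξ K lam).partialTrace

def sovOp (η : R) (ξ : Fin N → R) (K : Matrix (Fin n) (Fin n) R) (h : Fin N → Fin n) :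
    Matrix (Fin N → Fin n) (Fin N → Fin n) R :=
  (List.ofFn (fun a : Fin N => transfer n N η ξ K (ξ a) ^ (h a : ℕ))).prod

def sovMatrix (η : R) (ξ : Fin N → R) (K : Matrix (Fin n) (Fin n) R)
    (S : (Fin N → Fin n) → R) : Matrix (Fin N → Fin n) (Fin N → Fin n) R :=
  Matrix.of fun h x => (S ᵥ* sovOp n N η ξ K h) x

variable (φ : R →+* S)

theorem Rmat_map (η lam : R) : (Rmat n η lam).map φ = Rmat n (φ η) (φ lam) := by
  ext p q
  simp [Rmat, permOp, one_apply, apply_ite φ]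

theorem Raux_map (η lam : R) (j : Fin N) :
    (Raux n N η lam j).map φ = Raux n N (φ η) (φ lam) j := by
  ext p q
  simp [Raux, ← Rmat_map, apply_ite φ]

theorem Kaux_map (K : Matrix (Fin n) (Fin n) R) : (Kaux n N K).map φ = Kaux n N (K.map φ) := by
  ext p q
  simp [Kaux, apply_ite φ]

theorem monodromy_map (η : R) (ξ : Fin N → R) (K : Matrix (Fin n) (Fin n) R) (lam : R) :
    (monodromy n N η ξ K lam).map φ = monodromy n N (φ η) (φ ∘ ξ) (K.map φ) (φ lam) := by
  rw [monodromy, monodromy, Matrix.map_mul, Kaux_map]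
  change _ * φ.mapMatrix _ = _
  simp [map_list_prod, List.map_ofFn, Function.comp_def, Raux_map]

theorem transfer_map (η : R) (ξ : Fin N → R) (K : Matrix (Fin n) (Fin n) R) (lam : R) :
    (transfer n N η ξ K lam).map φ = transfer n N (φ η) (φ ∘ ξ) (K.map φ) (φ lam) := by
  rw [transfer, transfer, ← partialTrace_map, monodromy_map]

theorem sovOp_map (η : R) (ξ : Fin N → R) (K : Matrix (Fin n) (Fin n) R) (h : Fin N → Fin n) :
    (sovOp n N η ξ K h).map φ = sovOp n N (φ η) (φ ∘ ξ) (K.map φ) h := by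
  change φ.mapMatrix _ = _
  simp only [sovOp, map_list_prod, List.map_ofFn, Function.comp_def, map_pow,
    RingHom.mapMatrix_apply, transfer_map]

theorem det_sovMatrix_map (η : R) (ξ : Fin N → R) (K : Matrix (Fin n) (Fin n) R)
    (S : (Fin N → Fin n) → R) :
    φ (sovMatrix n N η ξ K S).det = (sovMatrix n N (φ η) (φ ∘ ξ) (K.map φ) (φ ∘ S)).det := by
  rw [RingHom.map_det]
  congr 1
  ext h x
  simp [sovMatrix, vecMul, dotProduct, ← sovOp_map]

end Definitions

section AuxiliarySwap

variable {R : Type*} [CommRing R] {n N : ℕ}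

theorem Raux_eq_smul_one_add (η lam : R) (j : Fin N) :
    Raux n N η lam j = lam • 1 + η • Raux n N 1 0 j := by
  ext p q
  have hδ : (1 : Matrix (Fin n × Fin n) (Fin n × Fin n) R) (p.1, p.2 j) (q.1, q.2 j) *
      ∏ c ∈ univ.filter (fun c => c ≠ j), (if p.2 c = q.2 c then (1 : R) else 0) =
      (1 : Matrix (Fin n × (Fin N → Fin n)) (Fin n × (Fin N → Fin n)) R) p q := by
    simp only [one_apply, prod_boole, boole_mul, ← ite_and]
    congr 1
    simp only [mem_filter, mem_univ, true_and, Prod.ext_iff, funext_iff]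
    grind
  simp [Raux, Rmat, add_mul, mul_assoc, ← hδ]

theorem partialTrace_Kaux_mul_Raux (K : Matrix (Fin n) (Fin n) R) (a : Fin N) :
    (Kaux n N K * Raux n N 1 0 a).partialTrace = piKronecker (Pi.mulSingle a K) := by
  ext x y
  rw [piKronecker, of_apply, ← mul_prod_erase _ _ (mem_univ a), Pi.mulSingle_eq_same]
  have hrest : ∏ c ∈ univ.erase a, (Pi.mulSingle a K : Fin N → Matrix _ _ R) c (x c) (y c) =
      ∏ c ∈ univ.filter (· ≠ a), if x c = y c then 1 else 0 := by
    rw [filter_ne']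
    exact prod_congr rfl fun c hc => by rw [Pi.mulSingle_eq_of_ne (ne_of_mem_erase hc), one_apply]
  rw [hrest]
  simp only [partialTrace, Kaux, Raux, Rmat, permOp, mul_apply, Fintype.sum_prod_type, of_apply,
    Matrix.add_apply, Matrix.zero_apply, zero_smul, one_smul, zero_add, ite_and, mul_ite, ite_mul,
    mul_one, mul_zero, one_mul, zero_mul, ne_eq, sum_ite_irrel, sum_const_zero, sum_ite_eq',
    mem_univ, ↓reduceIte, eq_comm (a := x)]
  rw [sum_comm]
  simp

end AuxiliarySwap

section Leading

variable {n N : ℕ} (K : Matrix (Fin n) (Fin n) ℂ) (w : Fin N → ℂ)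

def linearXi : Fin N → ℂ[X] := fun b => C (w b) * X

theorem Raux_linearXi (a b : Fin N) :
    Raux n N (1 : ℂ[X]) (linearXi w a - linearXi w b) b =
      (C (w a - w b) * X) • 1 + (Raux n N (1 : ℂ) 0 b).map C := by
  rw [Raux_eq_smul_one_add, Raux_map, linearXi, linearXi, C_sub, sub_mul, one_smul, map_one,
    map_zero]

theorem natDegreeLE_Raux_linearXi (a b : Fin N) :
    (Raux n N (1 : ℂ[X]) (linearXi w a - linearXi w b) b).NatDegreeLE
      (if b = a then 0 else 1) := by
  rw [Raux_linearXi]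
  split_ifs with hb
  · simpa [hb] using natDegreeLE_map_C (Raux n N (1 : ℂ) 0 a)
  · exact natDegreeLE_smul_one_add_map_C _ _

-- The shape of the right side makes the product over `b` a scalar times one non-identity factor.
theorem coeff_Raux_linearXi (a b : Fin N) :
    (Raux n N (1 : ℂ[X]) (linearXi w a - linearXi w b) b).coeff (if b = a then 0 else 1) =
      Function.update (fun b => w a - w b) a 1 b •
        (Pi.mulSingle a (Raux n N (1 : ℂ) 0 a) : Fin N → Matrix _ _ ℂ) b := by
  rw [Raux_linearXi]
  split_ifs with hb
  · subst hb
    simp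
  · simp only [Function.update_of_ne hb, Pi.mulSingle_eq_of_ne hb, coeff_smul_one_add_map_C]

theorem monodromy_linearXi (a : Fin N) :
    (monodromy n N 1 (linearXi w) (K.map C) (linearXi w a)).NatDegreeLE (N - 1) ∧
      (monodromy n N 1 (linearXi w) (K.map C) (linearXi w a)).coeff (N - 1) =
        (∏ b ∈ univ.erase a, (w a - w b)) • (Kaux n N K * Raux n N 1 0 a) := by
  have hdeg : ∑ j : Fin N, (if j.rev = a then 0 else 1) = N - 1 := by
    rw [Fintype.sum_equiv Fin.revPerm (fun j => if j.rev = a then 0 else 1)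
      (fun b => if b = a then 0 else 1) fun _ => rfl]
    simp [sum_ite, filter_ne']
  have hK : (Kaux n N (K.map C)).NatDegreeLE 0 := Kaux_map n N C K ▸ natDegreeLE_map_C _
  have hR := NatDegreeLE.list_ofFn_prod fun j => natDegreeLE_Raux_linearXi (n := n) w a j.rev
  have hc := coeff_list_ofFn_prod fun j => natDegreeLE_Raux_linearXi (n := n) w a j.rev
  rw [hdeg] at hR
  refine ⟨by simpa [monodromy] using hK.mul hR, ?_⟩
  have hrev (j : Fin N) : (Pi.mulSingle a (Raux n N (1 : ℂ) 0 a) : Fin N → Matrix _ _ ℂ) j.rev =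
      (Pi.mulSingle a.rev (Raux n N (1 : ℂ) 0 a) : Fin N → Matrix _ _ ℂ) j := by
    simp [Pi.mulSingle_apply, Fin.rev_eq_iff]
  have hΓ : ∏ j : Fin N, Function.update (fun b => w a - w b) a 1 j.rev =
      ∏ b ∈ univ.erase a, (w a - w b) := by
    rw [Fintype.prod_equiv Fin.revPerm (fun j => Function.update (fun b => w a - w b) a 1 j.rev)
        (Function.update (fun b => w a - w b) a 1) fun _ => rfl,
      prod_update_of_mem (mem_univ a), one_mul, sdiff_singleton_eq_erase]
  simp only [coeff_Raux_linearXi, List.prod_ofFn_smul, hrev, List.prod_ofFn_mulSingle, hΓ,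
    hdeg] at hc
  rw [monodromy, ← zero_add (N - 1), coeff_mul_add hK hR, hc, ← Kaux_map, coeff_map_C_zero,
    mul_smul_comm]

theorem transfer_linearXi (a : Fin N) :
    (transfer n N 1 (linearXi w) (K.map C) (linearXi w a)).NatDegreeLE (N - 1) ∧
      (transfer n N 1 (linearXi w) (K.map C) (linearXi w a)).coeff (N - 1) =
        (∏ b ∈ univ.erase a, (w a - w b)) • piKronecker (Pi.mulSingle a K) := by
  obtain ⟨hdeg, hcoeff⟩ := monodromy_linearXi K w a
  refine ⟨hdeg.partialTrace, ?_⟩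
  rw [transfer, coeff_partialTrace, hcoeff, partialTrace_smul, partialTrace_Kaux_mul_Raux]

theorem sovOp_linearXi (h : Fin N → Fin n) :
    (sovOp n N 1 (linearXi w) (K.map C) h).NatDegreeLE (∑ a, (h a : ℕ) * (N - 1)) ∧
      (sovOp n N 1 (linearXi w) (K.map C) h).coeff (∑ a, (h a : ℕ) * (N - 1)) =
        (∏ a, (∏ b ∈ univ.erase a, (w a - w b)) ^ (h a : ℕ)) •
          piKronecker (fun c => K ^ (h c : ℕ)) := by
  have hT a := transfer_linearXi K w a
  refine ⟨NatDegreeLE.list_ofFn_prod fun a => (hT a).1.pow _, ?_⟩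
  rw [sovOp, coeff_list_ofFn_prod fun a => (hT a).1.pow _]
  simp only [coeff_pow, hT, _root_.smul_pow, List.prod_ofFn_smul]
  congr 1
  change _ = piKroneckerHom _
  rw [← Pi.list_prod_ofFn_mulSingle fun c => K ^ (h c : ℕ), map_list_prod, List.map_ofFn]
  congr 2
  ext1 a
  rw [piKronecker_pow, ← Pi.mulSingle_pow]
  rfl

variable (e : Fin n → ℂ)

theorem sovMatrix_linearXi_apply (h x : Fin N → Fin n) :
    (sovMatrix n N 1 (linearXi w) (K.map C) (fun v => C (∏ c, e (v c))) h x).natDegree ≤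
        ∑ a, (h a : ℕ) * (N - 1) ∧
      (sovMatrix n N 1 (linearXi w) (K.map C) (fun v => C (∏ c, e (v c))) h x).coeff
          (∑ a, (h a : ℕ) * (N - 1)) =
        (∏ a, (∏ b ∈ univ.erase a, (w a - w b)) ^ (h a : ℕ)) *
          piKronecker (fun _ : Fin N => of fun j i : Fin n => (e ᵥ* K ^ (j : ℕ)) i) h x := by
  obtain ⟨hdeg, hcoeff⟩ := sovOp_linearXi K w h
  refine ⟨natDegree_vecMul_le _ hdeg x, ?_⟩
  rw [sovMatrix, of_apply, coeff_vecMul, hcoeff, vecMul_smul, vecMul_piKronecker (fun _ => e)]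
  simp [piKronecker]

theorem det_sovMatrix_linearXi_ne_zero (hw : Function.Injective w)
    (he : IsUnit (of fun j i : Fin n => (e ᵥ* K ^ (j : ℕ)) i)) :
    (sovMatrix n N 1 (linearXi w) (K.map C) (fun v => C (∏ c, e (v c)))).det ≠ 0 := by
  intro h0
  have hcoeff :=
    coeff_det_sum_of_natDegree_le _ _ fun h x => (sovMatrix_linearXi_apply K w e h x).1
  simp only [(sovMatrix_linearXi_apply K w e _ _).2, h0, coeff_zero, det_mul_column] at hcoeff
  refine mul_ne_zero ?_ ((isUnit_iff_isUnit_det _).mp (isUnit_piKronecker fun _ => he)).ne_zero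
    hcoeff.symm
  refine prod_ne_zero_iff.mpr fun h _ => prod_ne_zero_iff.mpr fun a _ => pow_ne_zero _ ?_
  exact prod_ne_zero_iff.mpr fun b hb => sub_ne_zero.mpr (hw.ne (ne_of_mem_erase hb).symm)

end Leading

end GLnSoV.OverRing

namespace GLnSoV

theorem antisym_one (n : ℕ) : antisym n 1 = 1 := by
  ext v w
  rw [antisym, Fintype.sum_unique]
  simp [permTensorOp, one_apply]

theorem transfer_one (n N : ℕ) (η : ℂ) (ξ : Fin N → ℂ) (K : Matrix (Fin n) (Fin n) ℂ)
    (lam : ℂ) : transfer n N η ξ K 1 lam = OverRing.transfer n N η ξ K lam := by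
  have hH : antisymH n N 1 = 1 := by
    ext p q
    simp only [antisymH, antisym_one, of_apply, one_apply, Prod.ext_iff]
    split_ifs <;> simp_all
  ext x y
  simp only [transfer, OverRing.transfer, partialTrace, of_apply, List.ofFn_succ, List.ofFn_zero,
    List.prod_cons, List.prod_nil, mul_one, hH, one_mul]
  refine Fintype.sum_equiv (Equiv.funUnique (Fin 1) (Fin n)) _ _ fun v => ?_
  simp [MauxJ, OverRing.monodromy, monodromy, OverRing.Kaux, Kaux, OverRing.Raux, Raux,
    OverRing.Rmat, Rmat, OverRing.permOp, permOp]

theorem sovCovector_eq_sovMatrix (n N : ℕ) (η : ℂ) (ξ : Fin N → ℂ)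
    (K : Matrix (Fin n) (Fin n) ℂ) (S : (Fin N → Fin n) → ℂ) :
    (of fun h x => sovCovector n N η ξ K S h x) = OverRing.sovMatrix n N η ξ K S := by
  ext h x
  simp [sovCovector, OverRing.sovMatrix, sovOp, OverRing.sovOp, transfer_one]

def sovDet (n N : ℕ) (K : Matrix (Fin n) (Fin n) ℂ) :
    MvPolynomial ((Fin N → Fin n) ⊕ (Fin N ⊕ Unit)) ℂ :=
  (OverRing.sovMatrix n N (MvPolynomial.X (.inr (.inr ())))
    (fun b => MvPolynomial.X (.inr (.inl b))) (K.map MvPolynomial.C)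
    (fun v => MvPolynomial.X (.inl v))).det

theorem aeval_sovDet {n N : ℕ} (K : Matrix (Fin n) (Fin n) ℂ) {A : Type*} [CommRing A]
    [Algebra ℂ A] (f : (Fin N → Fin n) ⊕ (Fin N ⊕ Unit) → A) :
    MvPolynomial.aeval f (sovDet n N K) =
      (OverRing.sovMatrix n N (f (.inr (.inr ()))) (fun b => f (.inr (.inl b)))
        (K.map (algebraMap ℂ A)) (fun v => f (.inl v))).det := by
  rw [sovDet, ← AlgHom.coe_toRingHom, OverRing.det_sovMatrix_map, map_map]
  simp [Function.comp_def]

theorem sov_basis_generic_general (n N : ℕ)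
    (K : Matrix (Fin n) (Fin n) ℂ) (hK : minpoly ℂ K = K.charpoly) :
    ∃ D : MvPolynomial ((Fin N → Fin n) ⊕ (Fin N ⊕ Unit)) ℂ,
      D ≠ 0 ∧
      (∀ (S : (Fin N → Fin n) → ℂ) (ξ : Fin N → ℂ) (η : ℂ),
        MvPolynomial.eval (Sum.elim S (Sum.elim ξ fun _ => η)) D =
          (Matrix.of fun h x : Fin N → Fin n => sovCovector n N η ξ K S h x).det) ∧
      (∀ (S : (Fin N → Fin n) → ℂ) (ξ : Fin N → ℂ) (η : ℂ),
        MvPolynomial.eval (Sum.elim S (Sum.elim ξ fun _ => η)) D ≠ 0 →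
          ∃ B : Module.Basis (Fin N → Fin n) ℂ ((Fin N → Fin n) → ℂ),
            ∀ h, B h = sovCovector n N η ξ K S h) := by
  have heval (S : (Fin N → Fin n) → ℂ) (ξ : Fin N → ℂ) (η : ℂ) :
      MvPolynomial.eval (Sum.elim S (Sum.elim ξ fun _ => η)) (sovDet n N K) =
        (of fun h x : Fin N → Fin n => sovCovector n N η ξ K S h x).det := by
    rw [← MvPolynomial.aeval_eq_eval, aeval_sovDet, sovCovector_eq_sovMatrix]
    simp
  refine ⟨sovDet n N K, fun h0 => ?_, heval, fun S ξ η hD => ?_⟩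
  · obtain ⟨e, he⟩ := exists_isUnit_krylov K hK
    have hspec := aeval_sovDet K (A := ℂ[X]) <| Sum.elim (fun v => C (∏ c, e (v c)))
      (Sum.elim (OverRing.linearXi fun b : Fin N => (b : ℂ)) 1)
    rw [h0, map_zero] at hspec
    exact OverRing.det_sovMatrix_linearXi_ne_zero K _ e
      (fun a b hab => Fin.ext (by exact_mod_cast hab)) he hspec.symm
  · rw [heval] at hD
    exact exists_basis_rows_of_det_ne_zero hD

/-- generic existence of the SoV covector basis. If the twist matrix `K` is
nonderogatory, the determinant of the matrix of SoV covectors is a nonzero polynomial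
function of `(S, ξ, η)`, and outside its zero locus the SoV covectors form a basis of the
dual space. -/
theorem sov_basis_generic (n N : ℕ) (hn : 1 ≤ n) (hN : 1 ≤ N)
    (K : Matrix (Fin n) (Fin n) ℂ) (hK : minpoly ℂ K = K.charpoly) :
    ∃ D : MvPolynomial ((Fin N → Fin n) ⊕ (Fin N ⊕ Unit)) ℂ,
      D ≠ 0 ∧
      (∀ (S : (Fin N → Fin n) → ℂ) (ξ : Fin N → ℂ) (η : ℂ),
        MvPolynomial.eval (Sum.elim S (Sum.elim ξ fun _ => η)) D =
          (Matrix.of fun h x : Fin N → Fin n => sovCovector n N η ξ K S h x).det) ∧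
      (∀ (S : (Fin N → Fin n) → ℂ) (ξ : Fin N → ℂ) (η : ℂ),
        MvPolynomial.eval (Sum.elim S (Sum.elim ξ fun _ => η)) D ≠ 0 →
          ∃ B : Module.Basis (Fin N → Fin n) ℂ ((Fin N → Fin n) → ℂ),
            ∀ h, B h = sovCovector n N η ξ K S h) :=
  sov_basis_generic_general n N K hK

end GLnSoV
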